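/- arXiv:2302.05072 — 8 statements merged into one kernel-verified Lean document; each statement's English description precedes it below -/
import Mathlib

section
/- Let A00, A0, A1 be complete subalgebras of a complete Boolean algebra A with A00 ⊆ A0 and A00 ⊆ A1. The following are equivalent: (1) h_{A1}(a0) = h_{A00}(a0) for all a0 ∈ A0; (2) h_{A0}(a1) = h_{A00}(a1) for all a1 ∈ A1; (3) whenever a0 ∈ A0 and a1 ∈ A1 are nonzero and h_{A00}(a0) = h_{A00}(a1), then a0 ⊓ a1 ≠ ⊥. (When these equivalent conditions hold we say that projections in the diagram (A00; A0, A1; A) are correct.) -/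
/-- A complete subalgebra of a complete Boolean algebra `A`: a subset containing `⊥`,
closed under complementation and under suprema of arbitrary subsets. -/
structure CompleteSubalgebra {A : Type*} [CompleteBooleanAlgebra A] (S : Set A) : Prop where
  bot_mem : ⊥ ∈ S
  compl_mem : ∀ a ∈ S, aᶜ ∈ S
  sSup_mem : ∀ T ⊆ S, sSup T ∈ S

/-- The projection onto a complete subalgebra: `h_S(a) = sInf {s ∈ S : a ≤ s}`. -/
def projSub {A : Type*} [CompleteBooleanAlgebra A] (S : Set A) (a : A) : A :=
  sInf {s | s ∈ S ∧ a ≤ s}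

/-!
For `s` in a complete subalgebra `S`, an element is disjoint from `s` iff its projection
`h_S` is, and `h_S(a ⊓ d) = h_S(a) ⊓ d` for `d ∈ S`. Given (1), if `a0 ⊓ a1 = ⊥` then
`h_{A1}(a0) = h_{A00}(a0) = h_{A00}(a1) ≥ a1` is disjoint from `a1`, so `a1 = ⊥`. Conversely,
if `h_{A1}(a0) < h_{A00}(a0)`, then `b = h_{A00}(a0) \ h_{A1}(a0) ∈ A1` and `a0 ⊓ h_{A00}(b) ∈ A0`
are nonzero with the same `A00`-projection, yet disjoint. Condition (3) is symmetric in
`A0` and `A1`, so the same argument gives (2) ⇔ (3).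
-/

namespace CompleteSubalgebra

variable {A : Type*} [CompleteBooleanAlgebra A] {S : Set A}

theorem sInf_mem (hS : CompleteSubalgebra S) {T : Set A} (hT : T ⊆ S) : sInf T ∈ S := by
  rw [← compl_compl (sInf T), compl_sInf']
  exact hS.compl_mem _ <| hS.sSup_mem _ <|
    Set.image_subset_iff.2 fun t ht => hS.compl_mem t (hT ht)

theorem sup_mem (hS : CompleteSubalgebra S) {a b : A} (ha : a ∈ S) (hb : b ∈ S) :
    a ⊔ b ∈ S :=
  sSup_pair (a := a) (b := b) ▸ hS.sSup_mem _ (Set.pair_subset ha hb)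

theorem inf_mem (hS : CompleteSubalgebra S) {a b : A} (ha : a ∈ S) (hb : b ∈ S) :
    a ⊓ b ∈ S :=
  sInf_pair (a := a) (b := b) ▸ hS.sInf_mem (Set.pair_subset ha hb)

theorem himp_mem (hS : CompleteSubalgebra S) {a b : A} (ha : a ∈ S) (hb : b ∈ S) :
    a ⇨ b ∈ S :=
  himp_eq (x := a) (y := b) ▸ hS.sup_mem hb (hS.compl_mem a ha)

theorem sdiff_mem (hS : CompleteSubalgebra S) {a b : A} (ha : a ∈ S) (hb : b ∈ S) :
    a \ b ∈ S :=
  sdiff_eq (x := a) (y := b) ▸ hS.inf_mem ha (hS.compl_mem b hb)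

end CompleteSubalgebra

section Projection

variable {A : Type*} [CompleteBooleanAlgebra A] {S T : Set A} {a s : A}

theorem projSub_mem (hS : CompleteSubalgebra S) (a : A) : projSub S a ∈ S :=
  hS.sInf_mem fun _ hs => hs.1

theorem le_projSub (a : A) : a ≤ projSub S a :=
  le_sInf fun _ hs => hs.2

theorem projSub_le_iff (hs : s ∈ S) : projSub S a ≤ s ↔ a ≤ s :=
  ⟨(le_projSub a).trans, fun h => sInf_le ⟨hs, h⟩⟩

theorem projSub_le_projSub_of_subset (hTS : T ⊆ S) (a : A) : projSub S a ≤ projSub T a :=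
  sInf_le_sInf fun _ hs => ⟨hTS hs.1, hs.2⟩

theorem projSub_eq_bot_iff (hS : CompleteSubalgebra S) : projSub S a = ⊥ ↔ a = ⊥ := by
  simp only [← le_bot_iff]
  exact projSub_le_iff hS.bot_mem

theorem disjoint_projSub_iff (hS : CompleteSubalgebra S) (hs : s ∈ S) :
    Disjoint (projSub S a) s ↔ Disjoint a s := by
  simp only [← le_compl_iff_disjoint_right]
  exact projSub_le_iff (hS.compl_mem s hs)

theorem projSub_inf_of_mem (hS : CompleteSubalgebra S) (a : A) {d : A} (hd : d ∈ S) :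
    projSub S (a ⊓ d) = projSub S a ⊓ d := by
  refine le_antisymm ?_ ?_
  · exact (projSub_le_iff (hS.inf_mem (projSub_mem hS a) hd)).2
      (inf_le_inf_right d (le_projSub a))
  · rw [← le_himp_iff, projSub_le_iff (hS.himp_mem hd (projSub_mem hS _)), le_himp_iff]
    exact le_projSub _

end Projection

section Correctness

variable {A : Type*} [CompleteBooleanAlgebra A] {A00 A0 A1 : Set A}

theorem inf_ne_bot_of_projSub_eq (h1 : CompleteSubalgebra A1)
    (H : ∀ a0 ∈ A0, projSub A1 a0 = projSub A00 a0) :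
    ∀ a0 ∈ A0, ∀ a1 ∈ A1, a0 ≠ ⊥ → a1 ≠ ⊥ →
      projSub A00 a0 = projSub A00 a1 → a0 ⊓ a1 ≠ ⊥ := by
  intro a0 ha0 a1 ha1 _ ha1_ne hproj hdisj
  have : Disjoint (projSub A00 a1) a1 := by
    rw [← hproj, ← H a0 ha0, disjoint_projSub_iff h1 ha1]
    exact disjoint_iff.2 hdisj
  exact ha1_ne (this.eq_bot_of_ge (le_projSub a1))

theorem projSub_eq_of_inf_ne_bot (h00 : CompleteSubalgebra A00) (h0 : CompleteSubalgebra A0)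
    (h1 : CompleteSubalgebra A1) (h00_0 : A00 ⊆ A0) (h00_1 : A00 ⊆ A1)
    (H : ∀ a0 ∈ A0, ∀ a1 ∈ A1, a0 ≠ ⊥ → a1 ≠ ⊥ →
      projSub A00 a0 = projSub A00 a1 → a0 ⊓ a1 ≠ ⊥) :
    ∀ a0 ∈ A0, projSub A1 a0 = projSub A00 a0 := by
  intro a0 ha0
  refine (projSub_le_projSub_of_subset h00_1 a0).antisymm ?_
  rw [← sdiff_eq_bot_iff]
  by_contra hb
  set b := projSub A00 a0 \ projSub A1 a0
  have hb_mem : b ∈ A1 := h1.sdiff_mem (h00_1 (projSub_mem h00 a0)) (projSub_mem h1 a0)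
  have hb_le : projSub A00 b ≤ projSub A00 a0 :=
    (projSub_le_iff (projSub_mem h00 a0)).2 sdiff_le
  set a0' := a0 ⊓ projSub A00 b
  have ha0'_mem : a0' ∈ A0 := h0.inf_mem ha0 (h00_0 (projSub_mem h00 b))
  have hproj : projSub A00 a0' = projSub A00 b := by
    rw [projSub_inf_of_mem h00 a0 (projSub_mem h00 b), inf_eq_right.2 hb_le]
  have ha0'_ne : a0' ≠ ⊥ := by
    rwa [Ne, ← projSub_eq_bot_iff h00, hproj, projSub_eq_bot_iff h00]
  have hdisj : Disjoint a0' b :=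
    (Disjoint.mono_left (le_projSub a0) disjoint_sdiff_self_right).mono_left inf_le_left
  exact H a0' ha0'_mem b hb_mem ha0'_ne hb hproj (disjoint_iff.1 hdisj)

theorem projSub_eq_iff_inf_ne_bot (h00 : CompleteSubalgebra A00) (h0 : CompleteSubalgebra A0)
    (h1 : CompleteSubalgebra A1) (h00_0 : A00 ⊆ A0) (h00_1 : A00 ⊆ A1) :
    (∀ a0 ∈ A0, projSub A1 a0 = projSub A00 a0) ↔
      ∀ a0 ∈ A0, ∀ a1 ∈ A1, a0 ≠ ⊥ → a1 ≠ ⊥ →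
        projSub A00 a0 = projSub A00 a1 → a0 ⊓ a1 ≠ ⊥ :=
  ⟨inf_ne_bot_of_projSub_eq h1, projSub_eq_of_inf_ne_bot h00 h0 h1 h00_0 h00_1⟩

end Correctness

theorem correctness_tfae {A : Type*} [CompleteBooleanAlgebra A]
    (A00 A0 A1 : Set A)
    (h00 : CompleteSubalgebra A00) (h0 : CompleteSubalgebra A0)
    (h1 : CompleteSubalgebra A1)
    (h00_0 : A00 ⊆ A0) (h00_1 : A00 ⊆ A1) :
    List.TFAE
      [∀ a0 ∈ A0, projSub A1 a0 = projSub A00 a0,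
       ∀ a1 ∈ A1, projSub A0 a1 = projSub A00 a1,
       ∀ a0 ∈ A0, ∀ a1 ∈ A1, a0 ≠ ⊥ → a1 ≠ ⊥ →
         projSub A00 a0 = projSub A00 a1 → a0 ⊓ a1 ≠ ⊥] := by
  tfae_have 1 ↔ 3 := projSub_eq_iff_inf_ne_bot h00 h0 h1 h00_0 h00_1
  tfae_have 2 ↔ 3 := by
    rw [projSub_eq_iff_inf_ne_bot h00 h1 h0 h00_1 h00_0]
    exact ⟨fun H a0 ha0 a1 ha1 ha0_ne ha1_ne hproj => inf_comm a0 a1 ▸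
        H a1 ha1 a0 ha0 ha1_ne ha0_ne hproj.symm,
      fun H a1 ha1 a0 ha0 ha1_ne ha0_ne hproj => inf_comm a1 a0 ▸
        H a0 ha0 a1 ha1 ha0_ne ha1_ne hproj.symm⟩
  tfae_finish
end

section
/- Let ⟨I, ≤⟩ be a partial order satisfying (i)–(iv) and having no maximal element, and let L = WithTop I be obtained from I by adding a top element ℓ above all elements of I. Then the following are equivalent: (a) I satisfies conditions (v) and (vi); (b) L is a distributive lattice, i.e., every pair of elements of L has a greatest lower bound and a least upper bound in L and the distributive law a ⊓ (b ⊔ c) = (a ⊓ b) ⊔ (a ⊓ c) holds for all a, b, c ∈ L (equivalently, L admits a DistribLattice structure whose underlying order is the given order). -/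
/-!
Conditions (i) and (ii) say exactly that `WithTop I` is a lattice, in which `i ⊔ j = ⊤` when
`i` and `j` have no common upper bound in `I`; a lattice structure is determined by its order,
so (b) says that this lattice is distributive. Distributivity only has to be checked on triples
`i, j, j'` of elements of `I`: if `j, j'` have a common upper bound it is law (iv), and otherwise
`i ⊓ (j ⊔ j') = i`, so it is (vi). Conversely, (v) and (vi) are the two distributive laws on
triples in which `i, j`, respectively `j, j'`, have no common upper bound.
-/

theorem isLUB_pair_iff {α : Type*} [Preorder α] {a b c : α} :
    IsLUB {a, b} c ↔ a ≤ c ∧ b ≤ c ∧ ∀ x, a ≤ x → b ≤ x → c ≤ x := by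
  simp [IsLUB, IsLeast, upperBounds, lowerBounds, and_assoc]

theorem isGLB_pair_iff {α : Type*} [Preorder α] {a b c : α} :
    IsGLB {a, b} c ↔ c ≤ a ∧ c ≤ b ∧ ∀ x, x ≤ a → x ≤ b → x ≤ c := by
  simp [IsGLB, IsGreatest, upperBounds, lowerBounds, and_assoc]

theorem exists_distribLattice_iff_inf_sup_le {α : Type*} [L : Lattice α] :
    (∃ inst : DistribLattice α, ∀ a b : α, inst.le a b ↔ a ≤ b) ↔
      ∀ a b c : α, a ⊓ (b ⊔ c) ≤ a ⊓ b ⊔ a ⊓ c := by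
  refine ⟨fun ⟨inst, hle⟩ => ?_, fun h => ⟨.ofInfSupLe h, fun _ _ => .rfl⟩⟩
  obtain rfl : inst.toLattice = L := Lattice.ext hle
  exact fun a b c => (inf_sup_left a b c).le

namespace WithTop

variable {I : Type*} {meet join : I → I → I}

def infOfMeet (meet : I → I → I) : WithTop I → WithTop I → WithTop I
  | none, b => b
  | a, none => a
  | some i, some j => ↑(meet i j)

@[simp] theorem infOfMeet_top_left (b : WithTop I) : infOfMeet meet ⊤ b = b := rfl

@[simp] theorem infOfMeet_top_right (a : WithTop I) : infOfMeet meet a ⊤ = a := by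
  cases a <;> rfl

@[simp] theorem infOfMeet_coe (i j : I) : infOfMeet meet i j = meet i j := rfl

variable [PartialOrder I]

theorem isGLB_infOfMeet (hmeet : ∀ i j : I, IsGLB {i, j} (meet i j)) (a b : WithTop I) :
    IsGLB {a, b} (infOfMeet meet a b) := by
  rw [isGLB_pair_iff]
  induction a using WithTop.recTopCoe with
  | top => exact ⟨le_top, by simp, fun _ _ hx => by simpa using hx⟩
  | coe i =>
    induction b using WithTop.recTopCoe with
    | top => exact ⟨by simp, le_top, fun _ hx _ => by simpa using hx⟩
    | coe j =>
      obtain ⟨hi, hj, hglb⟩ := isGLB_pair_iff.1 (hmeet i j)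
      refine ⟨coe_le_coe.2 hi, coe_le_coe.2 hj, fun x hxi hxj => ?_⟩
      obtain ⟨k, rfl, hki⟩ := le_coe_iff.1 hxi
      exact coe_le_coe.2 (hglb k hki (coe_le_coe.1 hxj))

open Classical in
noncomputable def supOfPartialJoin (join : I → I → I) : WithTop I → WithTop I → WithTop I
  | some i, some j => if ∃ u, i ≤ u ∧ j ≤ u then ↑(join i j) else ⊤
  | _, _ => ⊤

@[simp] theorem supOfPartialJoin_top_left (b : WithTop I) : supOfPartialJoin join ⊤ b = ⊤ := rfl

@[simp] theorem supOfPartialJoin_top_right (a : WithTop I) : supOfPartialJoin join a ⊤ = ⊤ := by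
  cases a <;> rfl

theorem supOfPartialJoin_coe_of_bdd {i j : I} (h : ∃ u, i ≤ u ∧ j ≤ u) :
    supOfPartialJoin join i j = join i j := if_pos h

theorem supOfPartialJoin_coe_of_not_bdd {i j : I} (h : ¬∃ u, i ≤ u ∧ j ≤ u) :
    supOfPartialJoin join i j = ⊤ := if_neg h

theorem isLUB_supOfPartialJoin
    (hjoin : ∀ i j : I, (∃ u, i ≤ u ∧ j ≤ u) → IsLUB {i, j} (join i j)) (a b : WithTop I) :
    IsLUB {a, b} (supOfPartialJoin join a b) := by
  rw [isLUB_pair_iff]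
  induction a using WithTop.recTopCoe with
  | top => exact ⟨le_rfl, le_top, fun _ hx _ => hx⟩
  | coe i =>
    induction b using WithTop.recTopCoe with
    | top => exact ⟨le_top, le_rfl, fun _ _ hx => hx⟩
    | coe j =>
      by_cases hij : ∃ u, i ≤ u ∧ j ≤ u
      · obtain ⟨hi, hj, hlub⟩ := isLUB_pair_iff.1 (hjoin i j hij)
        rw [supOfPartialJoin_coe_of_bdd hij]
        refine ⟨coe_le_coe.2 hi, coe_le_coe.2 hj, fun x hix hjx => ?_⟩
        induction x using WithTop.recTopCoe with
        | top => exact le_top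
        | coe k => exact coe_le_coe.2 (hlub k (coe_le_coe.1 hix) (coe_le_coe.1 hjx))
      · rw [supOfPartialJoin_coe_of_not_bdd hij]
        refine ⟨le_top, le_top, fun x hix hjx => ?_⟩
        induction x using WithTop.recTopCoe with
        | top => exact le_rfl
        | coe k => exact absurd ⟨k, coe_le_coe.1 hix, coe_le_coe.1 hjx⟩ hij

theorem infOfMeet_supOfPartialJoin_le
    (hmeet : ∀ i j : I, IsGLB {i, j} (meet i j))
    (hjoin : ∀ i j : I, (∃ u, i ≤ u ∧ j ≤ u) → IsLUB {i, j} (join i j))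
    (hdistrib : ∀ i j k : I, (∃ u, j ≤ u ∧ k ≤ u) →
      meet i (join j k) = join (meet i j) (meet i k))
    (hvi : ∀ i j j' : I, ¬(∃ u, j ≤ u ∧ j' ≤ u) → join (meet i j) (meet i j') = i)
    (a b c : WithTop I) :
    infOfMeet meet a (supOfPartialJoin join b c) ≤
      supOfPartialJoin join (infOfMeet meet a b) (infOfMeet meet a c) := by
  have le_sup_left a b : a ≤ supOfPartialJoin join a b :=
    (isLUB_supOfPartialJoin hjoin a b).1 (by simp)
  have le_sup_right a b : b ≤ supOfPartialJoin join a b :=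
    (isLUB_supOfPartialJoin hjoin a b).1 (by simp)
  induction a using WithTop.recTopCoe with
  | top => simp
  | coe i =>
    induction b using WithTop.recTopCoe with
    | top => simpa using le_sup_left _ _
    | coe j =>
      induction c using WithTop.recTopCoe with
      | top => simpa using le_sup_right _ _
      | coe k =>
        have hbdd : ∃ u, meet i j ≤ u ∧ meet i k ≤ u :=
          ⟨i, (hmeet i j).1 (by simp), (hmeet i k).1 (by simp)⟩
        rw [infOfMeet_coe, infOfMeet_coe, supOfPartialJoin_coe_of_bdd hbdd]
        by_cases hjk : ∃ u, j ≤ u ∧ k ≤ u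
        · rw [supOfPartialJoin_coe_of_bdd hjk, infOfMeet_coe, hdistrib i j k hjk]
        · rw [supOfPartialJoin_coe_of_not_bdd hjk, infOfMeet_top_right, hvi i j k hjk]

theorem join_eq_join_meet_of_sup_inf_left
    (hdistrib : ∀ a b c : WithTop I, supOfPartialJoin join a (infOfMeet meet b c) =
      infOfMeet meet (supOfPartialJoin join a b) (supOfPartialJoin join a c))
    (i j j' : I) (hij : ¬∃ u, i ≤ u ∧ j ≤ u) :
    (¬(∃ u, i ≤ u ∧ j' ≤ u) ∧ ¬(∃ u, i ≤ u ∧ meet j j' ≤ u)) ∨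
      join i j' = join i (meet j j') := by
  have e := hdistrib i j j'
  rw [infOfMeet_coe, supOfPartialJoin_coe_of_not_bdd hij, infOfMeet_top_left] at e
  by_cases hij' : ∃ u, i ≤ u ∧ j' ≤ u
  · right
    rw [supOfPartialJoin_coe_of_bdd hij'] at e
    by_cases him : ∃ u, i ≤ u ∧ meet j j' ≤ u
    · rw [supOfPartialJoin_coe_of_bdd him] at e
      exact (coe_inj.1 e).symm
    · rw [supOfPartialJoin_coe_of_not_bdd him] at e
      exact absurd e.symm coe_ne_top
  · refine .inl ⟨hij', fun him => ?_⟩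
    rw [supOfPartialJoin_coe_of_bdd him, supOfPartialJoin_coe_of_not_bdd hij'] at e
    exact coe_ne_top e

theorem join_meet_meet_eq_of_inf_sup_left
    (hmeet : ∀ i j : I, IsGLB {i, j} (meet i j))
    (hdistrib : ∀ a b c : WithTop I, infOfMeet meet a (supOfPartialJoin join b c) =
      supOfPartialJoin join (infOfMeet meet a b) (infOfMeet meet a c))
    (i j j' : I) (hjj' : ¬∃ u, j ≤ u ∧ j' ≤ u) :
    join (meet i j) (meet i j') = i := by
  have hbdd : ∃ u, meet i j ≤ u ∧ meet i j' ≤ u :=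
    ⟨i, (hmeet i j).1 (by simp), (hmeet i j').1 (by simp)⟩
  have e := hdistrib i j j'
  rw [supOfPartialJoin_coe_of_not_bdd hjj', infOfMeet_top_right, infOfMeet_coe, infOfMeet_coe,
    supOfPartialJoin_coe_of_bdd hbdd] at e
  exact (coe_inj.1 e).symm

end WithTop

theorem conds_v_vi_iff_withTop_distribLattice_general
    {I : Type*} [PartialOrder I]
    (meet join : I → I → I)
    -- (i): `meet i j` is the greatest lower bound of `i` and `j`
    (hmeet : ∀ i j : I, IsGLB {i, j} (meet i j))
    -- (ii): if `i`, `j` have a common upper bound, `join i j` is their least upper bound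
    (hjoin : ∀ i j : I, (∃ u, i ≤ u ∧ j ≤ u) → IsLUB {i, j} (join i j))
    -- (iv): the distributive laws hold whenever both sides exist
    (hdistrib1 : ∀ i j k : I, (∃ u, j ≤ u ∧ k ≤ u) →
      meet i (join j k) = join (meet i j) (meet i k)) :
    -- (a): conditions (v) and (vi)
    ((∀ i j j' : I, ¬(∃ u, i ≤ u ∧ j ≤ u) →
        ((¬(∃ u, i ≤ u ∧ j' ≤ u) ∧ ¬(∃ u, i ≤ u ∧ meet j j' ≤ u)) ∨
          join i j' = join i (meet j j')) ) ∧
     (∀ i j j' : I, ¬(∃ u, j ≤ u ∧ j' ≤ u) → join (meet i j) (meet i j') = i))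
    ↔
    -- (b): `WithTop I` admits a distributive lattice structure with the given order
    (∃ inst : DistribLattice (WithTop I),
      ∀ a b : WithTop I,
        @LE.le (WithTop I)
          (@Preorder.toLE _ (@PartialOrder.toPreorder _
            (@SemilatticeInf.toPartialOrder _ (@Lattice.toSemilatticeInf _
              (@DistribLattice.toLattice _ inst))))) a b ↔ a ≤ b) := by
  let : Lattice (WithTop I) := Lattice.ofIsLUBofIsGLB _ _
    (WithTop.isLUB_supOfPartialJoin hjoin) (WithTop.isGLB_infOfMeet hmeet)
  refine Iff.trans ?_ exists_distribLattice_iff_inf_sup_le.symm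
  constructor
  · rintro ⟨-, hvi⟩
    exact WithTop.infOfMeet_supOfPartialJoin_le hmeet hjoin hdistrib1 hvi
  · intro h
    let := DistribLattice.ofInfSupLe h
    exact ⟨WithTop.join_eq_join_meet_of_sup_inf_left sup_inf_left,
      WithTop.join_meet_meet_eq_of_inf_sup_left hmeet inf_sup_left⟩

/-- A partial order satisfying (i)–(iv) with no maximal element satisfies (v) and (vi)
iff adding a top element yields a distributive lattice. -/
theorem conds_v_vi_iff_withTop_distribLattice
    {I : Type*} [PartialOrder I]
    (meet join : I → I → I)
    -- (i): `meet i j` is the greatest lower bound of `i` and `j`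
    (hmeet : ∀ i j : I, IsGLB {i, j} (meet i j))
    -- (ii): if `i`, `j` have a common upper bound, `join i j` is their least upper bound
    (hjoin : ∀ i j : I, (∃ u, i ≤ u ∧ j ≤ u) → IsLUB {i, j} (join i j))
    -- (iii): among any three elements, two have a common upper bound
    (hthree : ∀ i j k : I,
      (∃ u, i ≤ u ∧ j ≤ u) ∨ (∃ u, i ≤ u ∧ k ≤ u) ∨ (∃ u, j ≤ u ∧ k ≤ u))
    -- (iv): the distributive laws hold whenever both sides exist
    (hdistrib1 : ∀ i j k : I, (∃ u, j ≤ u ∧ k ≤ u) →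
      meet i (join j k) = join (meet i j) (meet i k))
    (hdistrib2 : ∀ i j k : I, (∃ u, i ≤ u ∧ j ≤ u) → (∃ u, i ≤ u ∧ k ≤ u) →
      join i (meet j k) = meet (join i j) (join i k))
    -- `I` has no maximal element
    (hnomax : ∀ i : I, ∃ j : I, i < j) :
    -- (a): conditions (v) and (vi)
    ((∀ i j j' : I, ¬(∃ u, i ≤ u ∧ j ≤ u) →
        ((¬(∃ u, i ≤ u ∧ j' ≤ u) ∧ ¬(∃ u, i ≤ u ∧ meet j j' ≤ u)) ∨
          join i j' = join i (meet j j')) ) ∧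
     (∀ i j j' : I, ¬(∃ u, j ≤ u ∧ j' ≤ u) → join (meet i j) (meet i j') = i))
    ↔
    -- (b): `WithTop I` admits a distributive lattice structure with the given order
    (∃ inst : DistribLattice (WithTop I),
      ∀ a b : WithTop I,
        @LE.le (WithTop I)
          (@Preorder.toLE _ (@PartialOrder.toPreorder _
            (@SemilatticeInf.toPartialOrder _ (@Lattice.toSemilatticeInf _
              (@DistribLattice.toLattice _ inst))))) a b ↔ a ≤ b) :=
  conds_v_vi_iff_withTop_distribLattice_general meet join hmeet hjoin hdistrib1
end

section
/- Let I be a distributive almost-lattice. For every finite subset F ⊆ I, the closure of F, i.e., the smallest closed subset of I containing F, is finite. -/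
/-- A distributive almost-lattice: a partial order where any two elements have a meet,
any two elements with a common upper bound have a join, among any three elements two have
a common upper bound, the distributive laws hold whenever both sides exist, and
conditions (v) and (vi) hold. -/
structure DistribAlmostLattice (I : Type*) [PartialOrder I] where
  meet : I → I → I
  join : I → I → I
  /-- (i): `meet i j` is the greatest lower bound of `i` and `j` -/
  meet_isGLB : ∀ i j : I, IsGLB {i, j} (meet i j)
  /-- (ii): if `i`, `j` have a common upper bound, `join i j` is their least upper bound -/
  join_isLUB : ∀ i j : I, (∃ u, i ≤ u ∧ j ≤ u) → IsLUB {i, j} (join i j)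
  /-- (iii): among any three elements, two have a common upper bound -/
  two_of_three : ∀ i j k : I,
    (∃ u, i ≤ u ∧ j ≤ u) ∨ (∃ u, i ≤ u ∧ k ≤ u) ∨ (∃ u, j ≤ u ∧ k ≤ u)
  /-- (iv): distributivity of meet over join (whenever both sides exist) -/
  distrib_meet_join : ∀ i j k : I, (∃ u, j ≤ u ∧ k ≤ u) →
    meet i (join j k) = join (meet i j) (meet i k)
  /-- (iv): distributivity of join over meet (whenever both sides exist) -/
  distrib_join_meet : ∀ i j k : I, (∃ u, i ≤ u ∧ j ≤ u) → (∃ u, i ≤ u ∧ k ≤ u) →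
    join i (meet j k) = meet (join i j) (join i k)
  /-- (v) -/
  cond_v : ∀ i j j' : I, ¬(∃ u, i ≤ u ∧ j ≤ u) →
    ((¬(∃ u, i ≤ u ∧ j' ≤ u) ∧ ¬(∃ u, i ≤ u ∧ meet j j' ≤ u)) ∨
      join i j' = join i (meet j j'))
  /-- (vi) -/
  cond_vi : ∀ i j j' : I, ¬(∃ u, j ≤ u ∧ j' ≤ u) →
    join (meet i j) (meet i j') = i

namespace DistribAlmostLattice

variable {I : Type*} [PartialOrder I] (L : DistribAlmostLattice I)

theorem meet_le_left (i j : I) : L.meet i j ≤ i :=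
  (L.meet_isGLB i j).1 (Set.mem_insert _ _)

theorem meet_le_right (i j : I) : L.meet i j ≤ j :=
  (L.meet_isGLB i j).1 (Set.mem_insert_of_mem _ rfl)

theorem le_join_left (i j : I) (h : ∃ u, i ≤ u ∧ j ≤ u) : i ≤ L.join i j :=
  (L.join_isLUB i j h).1 (Set.mem_insert _ _)

theorem le_join_right (i j : I) (h : ∃ u, i ≤ u ∧ j ≤ u) : j ≤ L.join i j :=
  (L.join_isLUB i j h).1 (Set.mem_insert_of_mem _ rfl)

end DistribAlmostLattice

/-- A subset `F` of a distributive almost-lattice is closed if it is closed under meets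
and under joins whenever they exist. -/
def IsClosedSubset {I : Type*} [PartialOrder I] (L : DistribAlmostLattice I)
    (F : Set I) : Prop :=
  ∀ i ∈ F, ∀ j ∈ F, L.meet i j ∈ F ∧ ((∃ u, i ≤ u ∧ j ≤ u) → L.join i j ∈ F)

/-!
The meets of subsets of `F` form a finite set `M` closed under meets, a meet of elements of `F`
being the greatest lower bound of the set of those elements. Closing `M` under the joins that
exist keeps it finite, since every new element is the least upper bound of a subset of `M`, and
keeps it closed under meets, since meets distribute over existing joins. This gives a finite
closed set containing `F`.
-/

theorem Set.Finite.setOf_exists_subset {α β : Type*} {A : Set α} (hA : A.Finite)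
    (R : Set α → β → Prop) (hR : ∀ S, {x | R S x}.Subsingleton) :
    {x | ∃ S ⊆ A, R S x}.Finite :=
  (hA.finite_subsets.biUnion fun S _ => (hR S).finite).subset
    fun _ ⟨_, hS, hx⟩ => Set.mem_biUnion hS hx

namespace DistribAlmostLattice

variable {I : Type*} [PartialOrder I] (L : DistribAlmostLattice I)

theorem le_meet_iff {i j k : I} : k ≤ L.meet i j ↔ k ≤ i ∧ k ≤ j := by
  rw [isGLB_iff_le_iff.1 (L.meet_isGLB i j), lowerBounds_insert, lowerBounds_singleton]
  rfl

theorem join_le_iff {i j k : I} (h : ∃ u, i ≤ u ∧ j ≤ u) :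
    L.join i j ≤ k ↔ i ≤ k ∧ j ≤ k := by
  rw [isLUB_iff_le_iff.1 (L.join_isLUB i j h), upperBounds_insert, upperBounds_singleton]
  rfl

theorem meet_comm (i j : I) : L.meet i j = L.meet j i :=
  (L.meet_isGLB i j).unique (Set.pair_comm i j ▸ L.meet_isGLB j i)

theorem isGLB_union {S T : Set I} {a b : I} (ha : IsGLB S a) (hb : IsGLB T b) :
    IsGLB (S ∪ T) (L.meet a b) :=
  isGLB_iff_le_iff.2 fun k => by
    rw [L.le_meet_iff, isGLB_iff_le_iff.1 ha, isGLB_iff_le_iff.1 hb, lowerBounds_union]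
    rfl

theorem isLUB_union {S T : Set I} {a b : I} (ha : IsLUB S a) (hb : IsLUB T b)
    (h : ∃ u, a ≤ u ∧ b ≤ u) : IsLUB (S ∪ T) (L.join a b) :=
  isLUB_iff_le_iff.2 fun k => by
    rw [L.join_le_iff h, isLUB_iff_le_iff.1 ha, isLUB_iff_le_iff.1 hb, upperBounds_union]
    rfl

inductive JoinClosure (A : Set I) : Set I
  | base {a : I} : a ∈ A → JoinClosure A a
  | join {a b : I} : JoinClosure A a → JoinClosure A b → (∃ u, a ≤ u ∧ b ≤ u) →
      JoinClosure A (L.join a b)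

variable {L}

theorem JoinClosure.exists_subset_isLUB {A : Set I} {x : I} (hx : x ∈ L.JoinClosure A) :
    ∃ S ⊆ A, IsLUB S x := by
  induction hx with
  | base ha => exact ⟨{_}, Set.singleton_subset_iff.2 ha, isLUB_singleton⟩
  | join _ _ hab ihA ihB =>
    obtain ⟨S, hSA, hS⟩ := ihA
    obtain ⟨T, hTA, hT⟩ := ihB
    exact ⟨S ∪ T, Set.union_subset hSA hTA, L.isLUB_union hS hT hab⟩

theorem JoinClosure.meet_mem {A : Set I} {x y : I}
    (hx : ∀ a ∈ A, L.meet x a ∈ L.JoinClosure A) (hy : y ∈ L.JoinClosure A) :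
    L.meet x y ∈ L.JoinClosure A := by
  induction hy with
  | base ha => exact hx _ ha
  | @join a b _ _ hab iha ihb =>
    rw [L.distrib_meet_join x a b hab]
    exact .join iha ihb ⟨x, L.meet_le_left _ _, L.meet_le_left _ _⟩

theorem isClosedSubset_joinClosure {A : Set I} (hA : ∀ a ∈ A, ∀ b ∈ A, L.meet a b ∈ A) :
    IsClosedSubset L (L.JoinClosure A) := fun x hx _ hy =>
  ⟨JoinClosure.meet_mem (fun a ha => L.meet_comm x a ▸
      JoinClosure.meet_mem (fun b hb => .base (hA a ha b hb)) hx) hy,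
    JoinClosure.join hx hy⟩

end DistribAlmostLattice

/-- The closure of a finite subset of a distributive almost-lattice is finite. -/
theorem closure_of_finite_finite {I : Type*} [PartialOrder I]
    (L : DistribAlmostLattice I) (F : Set I) (hF : F.Finite) :
    (⋂₀ {C : Set I | IsClosedSubset L C ∧ F ⊆ C}).Finite := by
  set M := {x | ∃ S ⊆ F, IsGLB S x}
  have hM : M.Finite := hF.setOf_exists_subset IsGLB fun _ _ ha _ hb => ha.unique hb
  have hM_meet : ∀ a ∈ M, ∀ b ∈ M, L.meet a b ∈ M := by
    rintro a ⟨S, hSF, hS⟩ b ⟨T, hTF, hT⟩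
    exact ⟨S ∪ T, Set.union_subset hSF hTF, L.isGLB_union hS hT⟩
  have hF_sub : F ⊆ L.JoinClosure M := fun x hx =>
    .base ⟨{x}, Set.singleton_subset_iff.2 hx, isGLB_singleton⟩
  have hG : (L.JoinClosure M).Finite :=
    (hM.setOf_exists_subset IsLUB fun _ _ ha _ hb => ha.unique hb).subset
      fun _ hx => DistribAlmostLattice.JoinClosure.exists_subset_isLUB hx
  exact hG.subset <| Set.sInter_subset_of_mem
    ⟨DistribAlmostLattice.isClosedSubset_joinClosure hM_meet, hF_sub⟩
end

section
/- Let I be a distributive almost-lattice and let F ⊆ I be finite, nonempty and closed. Then either F has a greatest element j0 (i.e., f ≤ j0 for all f ∈ F), or there exist two elements j0, j1 ∈ F which have no common upper bound in I and such that every f ∈ F satisfies f ≤ j0 or f ≤ j1. -/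
/-!
A maximal element `m` of `F` lies above every `f ∈ F` sharing an upper bound with it, because
`m ∨ f ∈ F` by closedness. If two maximal elements `j₀`, `j₁` have no common upper bound, axiom
(iii) applied to `j₀, j₁, f` gives `f ≤ j₀` or `f ≤ j₁`. Otherwise, by the first fact, any two
maximal elements coincide, and since `F` is finite this maximal element is greatest.
-/

namespace DistribAlmostLattice

variable {I : Type*} [PartialOrder I] {L : DistribAlmostLattice I} {F : Set I}

theorem le_of_maximal_of_exists_ub (hF : IsClosedSubset L F) {m f : I}
    (hm : Maximal (· ∈ F) m) (hf : f ∈ F) (hub : ∃ u, m ≤ u ∧ f ≤ u) : f ≤ m :=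
  (L.le_join_right m f hub).trans <|
    hm.2 ((hF m hm.1 f hf).2 hub) (L.le_join_left m f hub)

theorem le_or_le_of_maximal_of_not_exists_ub (hF : IsClosedSubset L F) {j₀ j₁ f : I}
    (hj₀ : Maximal (· ∈ F) j₀) (hj₁ : Maximal (· ∈ F) j₁) (hj : ¬∃ u, j₀ ≤ u ∧ j₁ ≤ u)
    (hf : f ∈ F) : f ≤ j₀ ∨ f ≤ j₁ := by
  rcases L.two_of_three j₀ j₁ f with h | h | h
  · exact absurd h hj
  · exact Or.inl (le_of_maximal_of_exists_ub hF hj₀ hf h)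
  · exact Or.inr (le_of_maximal_of_exists_ub hF hj₁ hf h)

theorem le_of_maximal_of_forall_maximal_exists_ub (hF : IsClosedSubset L F) (hfin : F.Finite)
    (hub : ∀ j₀ j₁, Maximal (· ∈ F) j₀ → Maximal (· ∈ F) j₁ → ∃ u, j₀ ≤ u ∧ j₁ ≤ u)
    {j f : I} (hj : Maximal (· ∈ F) j) (hf : f ∈ F) : f ≤ j := by
  obtain ⟨m, hfm, hm⟩ := hfin.exists_le_maximal hf
  exact hfm.trans (le_of_maximal_of_exists_ub hF hj hm.1 (hub j m hj hm))

end DistribAlmostLattice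

open DistribAlmostLattice in
/-- A finite nonempty closed subset of a distributive almost-lattice either has a greatest
element, or has two top elements without common upper bound below one of which every
element lies. -/
theorem closed_finite_top_elements {I : Type*} [PartialOrder I]
    (L : DistribAlmostLattice I) (F : Set I) (hfin : F.Finite) (hne : F.Nonempty)
    (hclosed : IsClosedSubset L F) :
    (∃ j0 ∈ F, ∀ f ∈ F, f ≤ j0) ∨
    (∃ j0 ∈ F, ∃ j1 ∈ F, ¬(∃ u, j0 ≤ u ∧ j1 ≤ u) ∧ ∀ f ∈ F, f ≤ j0 ∨ f ≤ j1) := by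
  by_cases hsplit : ∃ j₀ j₁, Maximal (· ∈ F) j₀ ∧ Maximal (· ∈ F) j₁ ∧ ¬∃ u, j₀ ≤ u ∧ j₁ ≤ u
  · obtain ⟨j₀, j₁, hj₀, hj₁, hj⟩ := hsplit
    exact Or.inr ⟨j₀, hj₀.1, j₁, hj₁.1, hj,
      fun f hf => le_or_le_of_maximal_of_not_exists_ub hclosed hj₀ hj₁ hj hf⟩
  · have hub : ∀ j₀ j₁, Maximal (· ∈ F) j₀ → Maximal (· ∈ F) j₁ → ∃ u, j₀ ≤ u ∧ j₁ ≤ u :=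
      fun j₀ j₁ hj₀ hj₁ => not_not.1 fun hj => hsplit ⟨j₀, j₁, hj₀, hj₁, hj⟩
    obtain ⟨f, hf⟩ := hne
    obtain ⟨j, -, hj⟩ := hfin.exists_le_maximal hf
    exact Or.inl ⟨j, hj.1, fun f hf =>
      le_of_maximal_of_forall_maximal_exists_ub hclosed hfin hub hj hf⟩
end

section
/- Let β and δ be ordinals. The set I = {(α, γ) : α ≤ β, γ ≤ δ, and (α < β or γ < δ)} of pairs of ordinals, ordered componentwise ((α, γ) ≤ (α', γ') iff α ≤ α' and γ ≤ γ'), is a distributive almost-lattice. -/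
/-!
Inside `Ordinal × Ordinal`, the set in question is `Iio (β, δ)`. In any distributive lattice,
`Iio t` is closed under `⊓`, and under `⊔` whenever two elements have an upper bound in it, so
(i), (ii) and (iv) are inherited from the lattice. Two elements of `Iio t` without a common upper
bound join to `t`; with distributivity this gives (vi), and for (v) it gives
`i ⊔ (j ⊓ j') = (i ⊔ j) ⊓ (i ⊔ j') = i ⊔ j'`. Only (iii) depends on the order: every pair below
`(β, δ)` is strictly below it in some coordinate, and two of any three pairs share one.
-/

open Set

namespace DistribAlmostLattice

section SemilatticeSup

variable {X : Type*} [SemilatticeSup X] {t : X}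

theorem exists_upper_bound_iff_sup_lt {i j : Iio t} :
    (∃ u, i ≤ u ∧ j ≤ u) ↔ (i : X) ⊔ j < t :=
  ⟨fun ⟨u, hi, hj⟩ => (sup_le hi hj).trans_lt u.2,
    fun h => ⟨⟨_, h⟩, le_sup_left (a := (i : X)), le_sup_right (a := (i : X))⟩⟩

theorem sup_eq_of_not_exists_upper_bound {i j : Iio t} (h : ¬∃ u, i ≤ u ∧ j ≤ u) :
    (i : X) ⊔ j = t :=
  (sup_le i.2.le j.2.le).eq_of_not_lt (exists_upper_bound_iff_sup_lt.not.mp h)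

/-- The join in `Iio t` where it exists, and `i` otherwise. -/
noncomputable def iioJoin (i j : Iio t) : Iio t :=
  open Classical in if h : (i : X) ⊔ j < t then ⟨(i : X) ⊔ j, h⟩ else i

theorem coe_iioJoin {i j : Iio t} (h : ∃ u, i ≤ u ∧ j ≤ u) :
    (iioJoin i j : X) = (i : X) ⊔ j := by
  rw [iioJoin, dif_pos (exists_upper_bound_iff_sup_lt.mp h)]

theorem isLUB_iioJoin {i j : Iio t} (h : ∃ u, i ≤ u ∧ j ≤ u) : IsLUB {i, j} (iioJoin i j) :=
  IsLUB.of_image Subtype.coe_le_coe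
    (by rw [image_pair, coe_iioJoin h]; exact isLUB_pair (a := (i : X)))

end SemilatticeSup

section DistribLattice

variable {X : Type*} [DistribLattice X] {t : X}

theorem iioJoin_eq_iioJoin_inf_or_not_exists_upper_bound {i j j' : Iio t}
    (h : ¬∃ u, i ≤ u ∧ j ≤ u) :
    (¬(∃ u, i ≤ u ∧ j' ≤ u) ∧ ¬(∃ u, i ≤ u ∧ j ⊓ j' ≤ u)) ∨
      iioJoin i j' = iioJoin i (j ⊓ j') := by
  have hsup : (i : X) ⊔ ((j : X) ⊓ j') = (i : X) ⊔ j' := by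
    rw [sup_inf_left, sup_eq_of_not_exists_upper_bound h, inf_eq_right]
    exact sup_le i.2.le j'.2.le
  simp only [exists_upper_bound_iff_sup_lt, Iio.coe_inf, hsup]
  by_cases hj' : (i : X) ⊔ j' < t
  · right
    ext
    rw [coe_iioJoin (exists_upper_bound_iff_sup_lt.mpr hj'), coe_iioJoin
      (exists_upper_bound_iff_sup_lt.mpr (by rwa [Iio.coe_inf, hsup])), Iio.coe_inf, hsup]
  · exact Or.inl ⟨hj', hj'⟩

theorem iioJoin_inf_inf_of_sup_eq {i j j' : Iio t} (h : (j : X) ⊔ j' = t) :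
    iioJoin (i ⊓ j) (i ⊓ j') = i := by
  ext
  rw [coe_iioJoin ⟨i, inf_le_left, inf_le_left⟩, Iio.coe_inf, Iio.coe_inf, ← inf_sup_left, h,
    inf_eq_left]
  exact i.2.le

variable (t) in
noncomputable def ofIio
    (two_of_three : ∀ i j k : X, i < t → j < t → k < t → i ⊔ j < t ∨ i ⊔ k < t ∨ j ⊔ k < t) :
    DistribAlmostLattice (Iio t) where
  meet := (· ⊓ ·)
  join := iioJoin
  meet_isGLB _ _ := isGLB_pair
  join_isLUB _ _ := isLUB_iioJoin
  two_of_three i j k := by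
    simpa only [exists_upper_bound_iff_sup_lt] using two_of_three i j k i.2 j.2 k.2
  distrib_meet_join i j k h := by
    ext
    rw [Iio.coe_inf, coe_iioJoin h, coe_iioJoin ⟨i, inf_le_left, inf_le_left⟩, Iio.coe_inf,
      Iio.coe_inf, inf_sup_left]
  distrib_join_meet i j k hj hk := by
    obtain ⟨u, hiu, hju⟩ := hj
    ext
    rw [coe_iioJoin ⟨u, hiu, inf_le_left.trans hju⟩, Iio.coe_inf, Iio.coe_inf,
      coe_iioJoin ⟨u, hiu, hju⟩, coe_iioJoin hk, sup_inf_left]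
  cond_v _ _ _ := iioJoin_eq_iioJoin_inf_or_not_exists_upper_bound
  cond_vi _ _ _ h := iioJoin_inf_inf_of_sup_eq (sup_eq_of_not_exists_upper_bound h)

end DistribLattice

end DistribAlmostLattice

namespace Prod

variable {α β : Type*}

theorem lt_iff_le_and_fst_lt_or_snd_lt [PartialOrder α] [PartialOrder β] {p q : α × β} :
    p < q ↔ p.1 ≤ q.1 ∧ p.2 ≤ q.2 ∧ (p.1 < q.1 ∨ p.2 < q.2) := by
  rw [lt_iff_le_not_ge, le_def, le_def, not_and_or, lt_iff_le_not_ge, lt_iff_le_not_ge]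
  tauto

variable [LinearOrder α] [LinearOrder β]

theorem sup_lt_of_fst_lt_or_snd_lt {p q t : α × β} (hp : p ≤ t) (hq : q ≤ t)
    (h : p.1 < t.1 ∧ q.1 < t.1 ∨ p.2 < t.2 ∧ q.2 < t.2) : p ⊔ q < t :=
  lt_iff_le_and_fst_lt_or_snd_lt.2 ⟨sup_le hp.1 hq.1, sup_le hp.2 hq.2,
    h.imp sup_lt_iff.2 sup_lt_iff.2⟩

theorem sup_lt_or_sup_lt_or_sup_lt {p q r t : α × β} (hp : p < t) (hq : q < t) (hr : r < t) :
    p ⊔ q < t ∨ p ⊔ r < t ∨ q ⊔ r < t := by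
  have hpq := sup_lt_of_fst_lt_or_snd_lt hp.le hq.le
  have hpr := sup_lt_of_fst_lt_or_snd_lt hp.le hr.le
  have hqr := sup_lt_of_fst_lt_or_snd_lt hq.le hr.le
  have hp' := (lt_iff_le_and_fst_lt_or_snd_lt.1 hp).2.2
  have hq' := (lt_iff_le_and_fst_lt_or_snd_lt.1 hq).2.2
  have hr' := (lt_iff_le_and_fst_lt_or_snd_lt.1 hr).2.2
  grind

end Prod

/-- The set `{(α, γ) : α ≤ β, γ ≤ δ, (α < β or γ < δ)}` of pairs of ordinals, ordered
componentwise, is a distributive almost-lattice. -/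
theorem ordinal_pairs_distribAlmostLattice (β δ : Ordinal) :
    Nonempty (DistribAlmostLattice
      {p : Ordinal × Ordinal // p.1 ≤ β ∧ p.2 ≤ δ ∧ (p.1 < β ∨ p.2 < δ)}) := by
  have hI : (fun p : Ordinal × Ordinal => p.1 ≤ β ∧ p.2 ≤ δ ∧ (p.1 < β ∨ p.2 < δ)) =
      (· ∈ Iio (β, δ)) :=
    funext fun _ => propext (Prod.lt_iff_le_and_fst_lt_or_snd_lt (q := (β, δ))).symm
  exact hI ▸ ⟨DistribAlmostLattice.ofIio (β, δ) fun _ _ _ => Prod.sup_lt_or_sup_lt_or_sup_lt⟩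
end

section
/- In the setting of a correct system of complete Boolean algebras over a distributive almost-lattice I, the relation ⊑ on the set D of amalgamated-limit conditions is reflexive and transitive (i.e., ⊑ is a preorder on D). -/
section CorrectSystem

variable {I : Type*} [PartialOrder I] (L : DistribAlmostLattice I)
variable (A : I → Type*) [∀ i, CompleteBooleanAlgebra (A i)]
variable (e : ∀ i j : I, i ≤ j → A i → A j)

/-- The projection `h_{ji} : 𝔸_j → 𝔸_i` for `i ≤ j`:
`h_{ji}(a) = sInf {b ∈ 𝔸_i : a ≤ e_{ij}(b)}`. -/
def sysProj (i j : I) (hij : i ≤ j) (a : A j) : A i :=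
  sInf {b : A i | a ≤ e i j hij b}

/-- `(i, j, p, q)` is an amalgamated-limit condition: `p`, `q` are nonzero and they
have the same projection to `𝔸_{i ∧ j}`. -/
def InD {i j : I} (p : A i) (q : A j) : Prop :=
  p ≠ ⊥ ∧ q ≠ ⊥ ∧
    sysProj A e (L.meet i j) i (L.meet_le_left i j) p =
      sysProj A e (L.meet i j) j (L.meet_le_right i j) q

/-- Auxiliary relation: `e_{i'∧i,i}(h_{i',i'∧i}(p')) ≤ p`. -/
def ProjLe {i' i : I} (p' : A i') (p : A i) : Prop :=
  e (L.meet i' i) i (L.meet_le_right i' i)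
    (sysProj A e (L.meet i' i) i' (L.meet_le_left i' i) p') ≤ p

/-- The ordering `⊑` on amalgamated-limit conditions:
`(i', j', p', q') ⊑ (i, j, p, q)`. -/
def Sqle {i j i' j' : I} (p' : A i') (q' : A j') (p : A i) (q : A j) : Prop :=
  (ProjLe L A e p' p ∧ ProjLe L A e q' q) ∨
  (ProjLe L A e q' p ∧ ProjLe L A e p' q) ∨
  (ProjLe L A e p' p ∧ ProjLe L A e p' q) ∨
  (ProjLe L A e q' p ∧ ProjLe L A e q' q)

end CorrectSystem

/-!
Write `t_w a = e_{w,l} (h_{k,w} a)` for the passage of `a ∈ 𝔸_k` down to `𝔸_w` and back up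
to `𝔸_l`, so that `ProjLe a b` reads `t_{k∧m} a ≤ b`. The projection `h` is the lower adjoint
of the complete embedding `e`, hence `t_w` is monotone in `a` and antitone in `w`, and
correctness gives `t_{w₂} ∘ t_{w₁} = t_{w₁∧w₂}`. As `(k∧m)∧(m∧l) ≤ k∧l`, this makes `ProjLe`
reflexive and transitive. Finally `⊑` says that each of `p`, `q` lies above the transfer of `p'`
or of `q'`, and so inherits both properties.
-/

theorem FrameHom.map_sInf_of_booleanAlgebra {α β : Type*} [CompleteBooleanAlgebra α]
    [CompleteBooleanAlgebra β] (f : FrameHom α β) (s : Set α) :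
    f (sInf s) = sInf (f '' s) := by
  have hcompl : ∀ a, f aᶜ = (f a)ᶜ := map_compl' f
  rw [← compl_compl (sInf s), compl_sInf', hcompl, map_sSup, compl_sSup', Set.image_image,
    Set.image_image]
  simp only [hcompl, compl_compl]

theorem gc_sInf_setOf_le {α β : Type*} [CompleteLattice α] [CompleteLattice β]
    (f : sInfHom α β) : GaloisConnection (fun b => sInf {a | b ≤ f a}) f := by
  refine fun b a => ⟨fun h => le_trans ?_ (OrderHomClass.mono f h), fun h => sInf_le h⟩
  rw [map_sInf]
  exact le_sInf (by rintro _ ⟨c, hc, rfl⟩; exact hc)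

namespace DistribAlmostLattice

variable {I : Type*} [PartialOrder I] (L : DistribAlmostLattice I)

theorem le_meet {c i j : I} (hi : c ≤ i) (hj : c ≤ j) : c ≤ L.meet i j :=
  (L.meet_isGLB i j).2 (by rintro x (rfl | rfl) <;> assumption)

theorem join_le {i j k : I} (hi : i ≤ k) (hj : j ≤ k) : L.join i j ≤ k :=
  (L.join_isLUB i j ⟨k, hi, hj⟩).2 (by rintro x (rfl | rfl) <;> assumption)

end DistribAlmostLattice

section CorrectSystem

variable {I : Type*} [PartialOrder I] (L : DistribAlmostLattice I)
variable (A : I → Type*) [∀ i, CompleteBooleanAlgebra (A i)]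
variable (e : ∀ i j : I, i ≤ j → A i → A j)

structure IsCompleteEmbeddingSystem : Prop where
  injective : ∀ i j : I, ∀ hij : i ≤ j, Function.Injective (e i j hij)
  map_top : ∀ i j : I, ∀ hij : i ≤ j, e i j hij ⊤ = ⊤
  map_inf : ∀ i j : I, ∀ hij : i ≤ j, ∀ a b : A i,
    e i j hij (a ⊓ b) = e i j hij a ⊓ e i j hij b
  map_sSup : ∀ i j : I, ∀ hij : i ≤ j, ∀ S : Set (A i),
    e i j hij (sSup S) = sSup (e i j hij '' S)
  map_self : ∀ i : I, ∀ hii : i ≤ i, ∀ a : A i, e i i hii a = a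
  map_comp : ∀ i j k : I, ∀ hij : i ≤ j, ∀ hjk : j ≤ k, ∀ a : A i,
    e j k hjk (e i j hij a) = e i k (hij.trans hjk) a

structure IsCorrectSystem : Prop extends IsCompleteEmbeddingSystem A e where
  sysProj_join : ∀ i j : I, ∀ hub : ∃ u, i ≤ u ∧ j ≤ u, ∀ a : A i,
    sysProj A e j (L.join i j) (L.le_join_right i j hub)
        (e i (L.join i j) (L.le_join_left i j hub) a) =
      e (L.meet i j) j (L.meet_le_right i j)
        (sysProj A e (L.meet i j) i (L.meet_le_left i j) a)

def sysTransfer (w : I) {k l : I} (hwk : w ≤ k) (hwl : w ≤ l) (a : A k) : A l :=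
  e w l hwl (sysProj A e w k hwk a)

variable {L A e} {i j k l m i' j' i'' j'' : I}

theorem sqle_iff {p' : A i'} {q' : A j'} {p : A i} {q : A j} :
    Sqle L A e p' q' p q ↔
      (ProjLe L A e p' p ∨ ProjLe L A e q' p) ∧ (ProjLe L A e p' q ∨ ProjLe L A e q' q) := by
  unfold Sqle
  tauto

namespace IsCompleteEmbeddingSystem

def frameHom (he : IsCompleteEmbeddingSystem A e) (hij : i ≤ j) : FrameHom (A i) (A j) where
  toFun := e i j hij
  map_inf' := he.map_inf i j hij
  map_top' := he.map_top i j hij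
  map_sSup' := he.map_sSup i j hij

theorem gc (he : IsCompleteEmbeddingSystem A e) (hij : i ≤ j) :
    GaloisConnection (sysProj A e i j hij) (e i j hij) :=
  gc_sInf_setOf_le ⟨e i j hij, (he.frameHom hij).map_sInf_of_booleanAlgebra⟩

theorem map_le_map_iff (he : IsCompleteEmbeddingSystem A e) (hij : i ≤ j) {a b : A i} :
    e i j hij a ≤ e i j hij b ↔ a ≤ b :=
  ⟨fun h => inf_eq_left.1 (he.injective i j hij (by rw [he.map_inf, inf_eq_left.2 h])),
    fun h => (he.gc hij).monotone_u h⟩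

theorem sysProj_map (he : IsCompleteEmbeddingSystem A e) (hij : i ≤ j) (b : A i) :
    sysProj A e i j hij (e i j hij b) = b :=
  le_antisymm ((he.gc hij).l_u_le b) ((he.map_le_map_iff hij).1 ((he.gc hij).le_u_l _))

theorem sysProj_sysProj (he : IsCompleteEmbeddingSystem A e) (hij : i ≤ j) (hjk : j ≤ k)
    (a : A k) : sysProj A e i j hij (sysProj A e j k hjk a) = sysProj A e i k (hij.trans hjk) a :=
  ((he.gc hjk).compose (he.gc hij)).l_unique (he.gc _) (he.map_comp i j k hij hjk)

theorem sysProj_self (he : IsCompleteEmbeddingSystem A e) (hii : i ≤ i) (a : A i) :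
    sysProj A e i i hii a = a :=
  (he.gc hii).l_unique GaloisConnection.id (he.map_self i hii)

theorem sysTransfer_mono (he : IsCompleteEmbeddingSystem A e) {w : I} (hwk : w ≤ k)
    (hwl : w ≤ l) : Monotone (sysTransfer A e w hwk hwl) :=
  (he.gc hwl).monotone_u.comp (he.gc hwk).monotone_l

theorem sysTransfer_le_sysTransfer (he : IsCompleteEmbeddingSystem A e) {w w' : I}
    (hww' : w ≤ w') (hw'k : w' ≤ k) (hw'l : w' ≤ l) (a : A k) :
    sysTransfer A e w' hw'k hw'l a ≤ sysTransfer A e w (hww'.trans hw'k) (hww'.trans hw'l) a := by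
  unfold sysTransfer
  rw [← he.sysProj_sysProj hww' hw'k, ← he.map_comp w w' l hww' hw'l]
  exact (he.gc hw'l).monotone_u ((he.gc hww').le_u_l _)

theorem sysTransfer_self (he : IsCompleteEmbeddingSystem A e) (hkk : k ≤ k) (a : A k) :
    sysTransfer A e k hkk hkk a = a := by
  rw [sysTransfer, he.sysProj_self, he.map_self]

theorem projLe_refl (he : IsCompleteEmbeddingSystem A e) (a : A k) : ProjLe L A e a a :=
  (he.sysTransfer_le_sysTransfer (L.le_meet le_rfl le_rfl) (L.meet_le_left k k)
    (L.meet_le_right k k) a).trans_eq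
    (he.sysTransfer_self le_rfl a)

theorem sqle_refl (he : IsCompleteEmbeddingSystem A e) (p : A i) (q : A j) :
    Sqle L A e p q p q :=
  Or.inl ⟨he.projLe_refl p, he.projLe_refl q⟩

end IsCompleteEmbeddingSystem

namespace IsCorrectSystem

theorem sysProj_map_of_le (hL : IsCorrectSystem L A e) (hik : i ≤ k) (hjk : j ≤ k) (b : A i) :
    sysProj A e j k hjk (e i k hik b) =
      e (L.meet i j) j (L.meet_le_right i j)
        (sysProj A e (L.meet i j) i (L.meet_le_left i j) b) := by
  have hub : ∃ u, i ≤ u ∧ j ≤ u := ⟨k, hik, hjk⟩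
  have hvk : L.join i j ≤ k := L.join_le hik hjk
  rw [← hL.sysProj_sysProj (L.le_join_right i j hub) hvk,
    ← hL.map_comp i (L.join i j) k (L.le_join_left i j hub) hvk, hL.sysProj_map,
    hL.sysProj_join i j hub]

theorem sysTransfer_sysTransfer (hL : IsCorrectSystem L A e) {w₁ w₂ : I} (hw₁k : w₁ ≤ k)
    (hw₁m : w₁ ≤ m) (hw₂m : w₂ ≤ m) (hw₂l : w₂ ≤ l) (a : A k) :
    sysTransfer A e w₂ hw₂m hw₂l (sysTransfer A e w₁ hw₁k hw₁m a) =
      sysTransfer A e (L.meet w₁ w₂) ((L.meet_le_left w₁ w₂).trans hw₁k)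
        ((L.meet_le_right w₁ w₂).trans hw₂l) a := by
  simp only [sysTransfer]
  rw [hL.sysProj_map_of_le, hL.map_comp, hL.sysProj_sysProj]

theorem projLe_trans (hL : IsCorrectSystem L A e) {a : A k} {b : A m} {c : A l}
    (hab : ProjLe L A e a b) (hbc : ProjLe L A e b c) : ProjLe L A e a c :=
  have hmeet : L.meet (L.meet k m) (L.meet m l) ≤ L.meet k l :=
    L.le_meet ((L.meet_le_left _ _).trans (L.meet_le_left k m))
      ((L.meet_le_right _ _).trans (L.meet_le_right m l))
  calc sysTransfer A e (L.meet k l) (L.meet_le_left k l) (L.meet_le_right k l) a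
      ≤ sysTransfer A e (L.meet (L.meet k m) (L.meet m l)) _ _ a :=
        hL.sysTransfer_le_sysTransfer hmeet _ _ a
    _ = sysTransfer A e (L.meet m l) (L.meet_le_left m l) (L.meet_le_right m l)
          (sysTransfer A e (L.meet k m) (L.meet_le_left k m) (L.meet_le_right k m) a) :=
        (hL.sysTransfer_sysTransfer _ _ _ _ a).symm
    _ ≤ sysTransfer A e (L.meet m l) (L.meet_le_left m l) (L.meet_le_right m l) b :=
        hL.sysTransfer_mono _ _ hab
    _ ≤ c := hbc

theorem projLe_or_projLe_of_sqle (hL : IsCorrectSystem L A e) {p'' : A i''} {q'' : A j''}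
    {p' : A i'} {q' : A j'} {c : A l} (h : Sqle L A e p'' q'' p' q')
    (hc : ProjLe L A e p' c ∨ ProjLe L A e q' c) : ProjLe L A e p'' c ∨ ProjLe L A e q'' c := by
  obtain ⟨hp', hq'⟩ := sqle_iff.1 h
  rcases hc with hc | hc
  · exact hp'.imp (hL.projLe_trans · hc) (hL.projLe_trans · hc)
  · exact hq'.imp (hL.projLe_trans · hc) (hL.projLe_trans · hc)

theorem sqle_trans (hL : IsCorrectSystem L A e) {p'' : A i''} {q'' : A j''} {p' : A i'}
    {q' : A j'} {p : A i} {q : A j} (h₁ : Sqle L A e p'' q'' p' q')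
    (h₂ : Sqle L A e p' q' p q) : Sqle L A e p'' q'' p q :=
  sqle_iff.2 ⟨hL.projLe_or_projLe_of_sqle h₁ (sqle_iff.1 h₂).1,
    hL.projLe_or_projLe_of_sqle h₁ (sqle_iff.1 h₂).2⟩

end IsCorrectSystem

end CorrectSystem

theorem sqle_refl_trans_general {I : Type*} [PartialOrder I] (L : DistribAlmostLattice I)
    (A : I → Type*) [∀ i, CompleteBooleanAlgebra (A i)]
    (e : ∀ i j : I, i ≤ j → A i → A j)
    -- the `e i j` are complete embeddings forming a commuting system
    (he_inj : ∀ i j : I, ∀ hij : i ≤ j, Function.Injective (e i j hij))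
    (he_top : ∀ i j : I, ∀ hij : i ≤ j, e i j hij ⊤ = ⊤)
    (he_inf : ∀ i j : I, ∀ hij : i ≤ j, ∀ a b : A i,
      e i j hij (a ⊓ b) = e i j hij a ⊓ e i j hij b)
    (he_sSup : ∀ i j : I, ∀ hij : i ≤ j, ∀ S : Set (A i),
      e i j hij (sSup S) = sSup (e i j hij '' S))
    (he_id : ∀ i : I, ∀ hii : i ≤ i, ∀ a : A i, e i i hii a = a)
    (he_comp : ∀ i j k : I, ∀ hij : i ≤ j, ∀ hjk : j ≤ k, ∀ a : A i,
      e j k hjk (e i j hij a) = e i k (hij.trans hjk) a)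
    -- correctness: `h_{i∨j,j}(e_{i,i∨j}(a)) = e_{i∧j,j}(h_{i,i∧j}(a))`
    (hcorrect : ∀ i j : I, ∀ hub : ∃ u, i ≤ u ∧ j ≤ u, ∀ a : A i,
      sysProj A e j (L.join i j) (L.le_join_right i j hub)
          (e i (L.join i j) (L.le_join_left i j hub) a) =
        e (L.meet i j) j (L.meet_le_right i j)
          (sysProj A e (L.meet i j) i (L.meet_le_left i j) a)) :
    -- reflexivity on `D`
    (∀ i j : I, ∀ p : A i, ∀ q : A j, InD L A e p q → Sqle L A e p q p q) ∧
    -- transitivity on `D`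
    (∀ i j i' j' i'' j'' : I, ∀ p : A i, ∀ q : A j, ∀ p' : A i', ∀ q' : A j',
      ∀ p'' : A i'', ∀ q'' : A j'',
      InD L A e p q → InD L A e p' q' → InD L A e p'' q'' →
      Sqle L A e p'' q'' p' q' → Sqle L A e p' q' p q → Sqle L A e p'' q'' p q) := by
  have hL : IsCorrectSystem L A e :=
    { injective := he_inj, map_top := he_top, map_inf := he_inf, map_sSup := he_sSup,
      map_self := he_id, map_comp := he_comp, sysProj_join := hcorrect }
  exact ⟨fun _ _ p q _ => hL.sqle_refl p q,
    fun _ _ _ _ _ _ _ _ _ _ _ _ _ _ _ h₁ h₂ => hL.sqle_trans h₁ h₂⟩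

/-- In a correct system of complete Boolean algebras over a distributive almost-lattice,
the relation `⊑` is reflexive and transitive on the set `D` of amalgamated-limit
conditions. -/
theorem sqle_refl_trans {I : Type*} [PartialOrder I] (L : DistribAlmostLattice I)
    (A : I → Type*) [∀ i, CompleteBooleanAlgebra (A i)]
    (e : ∀ i j : I, i ≤ j → A i → A j)
    -- the `e i j` are complete embeddings forming a commuting system
    (he_inj : ∀ i j : I, ∀ hij : i ≤ j, Function.Injective (e i j hij))
    (he_bot : ∀ i j : I, ∀ hij : i ≤ j, e i j hij ⊥ = ⊥)
    (he_top : ∀ i j : I, ∀ hij : i ≤ j, e i j hij ⊤ = ⊤)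
    (he_inf : ∀ i j : I, ∀ hij : i ≤ j, ∀ a b : A i,
      e i j hij (a ⊓ b) = e i j hij a ⊓ e i j hij b)
    (he_sup : ∀ i j : I, ∀ hij : i ≤ j, ∀ a b : A i,
      e i j hij (a ⊔ b) = e i j hij a ⊔ e i j hij b)
    (he_sSup : ∀ i j : I, ∀ hij : i ≤ j, ∀ S : Set (A i),
      e i j hij (sSup S) = sSup (e i j hij '' S))
    (he_id : ∀ i : I, ∀ hii : i ≤ i, ∀ a : A i, e i i hii a = a)
    (he_comp : ∀ i j k : I, ∀ hij : i ≤ j, ∀ hjk : j ≤ k, ∀ a : A i,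
      e j k hjk (e i j hij a) = e i k (hij.trans hjk) a)
    -- correctness: `h_{i∨j,j}(e_{i,i∨j}(a)) = e_{i∧j,j}(h_{i,i∧j}(a))`
    (hcorrect : ∀ i j : I, ∀ hub : ∃ u, i ≤ u ∧ j ≤ u, ∀ a : A i,
      sysProj A e j (L.join i j) (L.le_join_right i j hub)
          (e i (L.join i j) (L.le_join_left i j hub) a) =
        e (L.meet i j) j (L.meet_le_right i j)
          (sysProj A e (L.meet i j) i (L.meet_le_left i j) a)) :
    -- reflexivity on `D`
    (∀ i j : I, ∀ p : A i, ∀ q : A j, InD L A e p q → Sqle L A e p q p q) ∧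
    -- transitivity on `D`
    (∀ i j i' j' i'' j'' : I, ∀ p : A i, ∀ q : A j, ∀ p' : A i', ∀ q' : A j',
      ∀ p'' : A i'', ∀ q'' : A j'',
      InD L A e p q → InD L A e p' q' → InD L A e p'' q'' →
      Sqle L A e p'' q'' p' q' → Sqle L A e p' q' p q → Sqle L A e p'' q'' p q) :=
  sqle_refl_trans_general L A e he_inj he_top he_inf he_sSup he_id he_comp hcorrect
end

section
/- Let A0 and A1 be complete Boolean algebras and e : A0 → A1 an injective bounded lattice homomorphism. Then the dual map p : X_{A1} → X_{A0}, p(x) = x ∘ e, is an open map if and only if e is a complete embedding, i.e., for every b ∈ A1 with b ≠ ⊥ one has sInf {a ∈ A0 : b ≤ e(a)} ≠ ⊥. -/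
/-- The Stone space of a Boolean algebra `B`: bounded lattice homomorphisms from `B` to
`Bool`, topologized as a subspace of the product space `Bool ^ B` with `Bool` discrete. -/
abbrev StonePoints (B : Type*) [BooleanAlgebra B] : Type _ :=
  BoundedLatticeHom B Bool

noncomputable instance (B : Type*) [BooleanAlgebra B] : TopologicalSpace (StonePoints B) :=
  TopologicalSpace.induced
    (fun x : BoundedLatticeHom B Bool => (x : B → Bool))
    (@Pi.topologicalSpace B (fun _ => Bool) (fun _ => ⊥))

/-!
Write `p` for the dual map and `O_b` for basic clopens. If `b ≤ e a` then `p(O_b) ⊆ O_a`.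
Conversely, if `c` is a lower bound of `{a | b ≤ e a}` and `z ∈ O_c`, then `e` maps the kernel
of `z` into an ideal missing `b`; a prime ideal separating the two is a point of `O_b` over `z`.
So `p(O_b) = O_c` whenever `c` is the least `a` with `b ≤ e a`, and then `p` is open. For a
complete embedding `c = sInf {a | b ≤ e a}` is such a least element: otherwise `b \ e c ≠ ⊥`
would have `sInf {a | b \ e c ≤ e a} ≤ c ⊓ cᶜ = ⊥`. If instead `p` is open, `p(O_b)` contains
some nonempty `O_c`, and `O_c ⊆ O_a` for every `a` with `b ≤ e a` gives
`⊥ < c ≤ sInf {a | b ≤ e a}`.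
-/

namespace Order.Ideal.IsPrime

variable {α : Type*} [Lattice α] {J : Ideal α}

theorem inf_mem_iff (hJ : J.IsPrime) {a b : α} : a ⊓ b ∈ J ↔ a ∈ J ∨ b ∈ J :=
  ⟨hJ.mem_or_mem, fun h => h.elim (J.lower inf_le_left) (J.lower inf_le_right)⟩

variable [BoundedOrder α]

open Classical in
noncomputable def toBoolHom (hJ : J.IsPrime) : BoundedLatticeHom α Bool where
  toFun a := decide (a ∉ J)
  map_sup' a b := by simp [sup_mem_iff]
  map_inf' a b := by simp [hJ.inf_mem_iff, not_or]
  map_top' := by simp [hJ.top_notMem]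
  map_bot' := by simp [J.bot_mem]

theorem toBoolHom_eq_false_iff (hJ : J.IsPrime) {a : α} : hJ.toBoolHom a = false ↔ a ∈ J := by
  simp [toBoolHom]

end Order.Ideal.IsPrime

theorem BoundedLatticeHom.apply_eq_true_of_le {α : Type*} [Lattice α] [BoundedOrder α]
    (x : BoundedLatticeHom α Bool) {a b : α} (h : a ≤ b) (ha : x a = true) : x b = true :=
  Bool.le_iff_imp.mp (OrderHomClass.mono x h) ha

theorem DistribLattice.exists_boolHom_of_disjoint_filter_ideal {α : Type*} [DistribLattice α]
    [BoundedOrder α] {F : Order.PFilter α} {I : Order.Ideal α} (h : Disjoint (F : Set α) I) :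
    ∃ x : BoundedLatticeHom α Bool, (∀ a ∈ F, x a = true) ∧ ∀ a ∈ I, x a = false := by
  obtain ⟨J, hJ, hIJ, hFJ⟩ := DistribLattice.prime_ideal_of_disjoint_filter_ideal h
  refine ⟨hJ.toBoolHom, fun a ha => ?_, fun a ha => hJ.toBoolHom_eq_false_iff.mpr (hIJ ha)⟩
  rw [← Bool.not_eq_false, hJ.toBoolHom_eq_false_iff]
  exact Set.disjoint_left.mp hFJ ha

namespace StonePoints

section BooleanAlgebra

variable {B : Type*} [BooleanAlgebra B]

def basicOpen (b : B) : Set (StonePoints B) := {x | x b = true}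

@[simp]
theorem mem_basicOpen {b : B} {x : StonePoints B} : x ∈ basicOpen b ↔ x b = true := Iff.rfl

theorem isOpen_basicOpen (b : B) : IsOpen (basicOpen b) :=
  ⟨(fun f : B → Bool => f b) ⁻¹' {true}, (continuous_apply b).isOpen_preimage _ (isOpen_discrete _),
    rfl⟩

theorem exists_apply_eq_true {b : B} (hb : b ≠ ⊥) : ∃ x : StonePoints B, x b = true := by
  obtain ⟨x, hx, -⟩ := DistribLattice.exists_boolHom_of_disjoint_filter_ideal
    (F := .principal b) (I := .principal ⊥) <| Set.disjoint_left.mpr fun a hba hab =>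
      hb (le_bot_iff.mp (le_trans hba (Order.Ideal.mem_principal.mp hab)))
  exact ⟨x, hx b le_rfl⟩

theorem basicOpen_subset_basicOpen_iff {a b : B} : basicOpen a ⊆ basicOpen b ↔ a ≤ b := by
  refine ⟨fun h => ?_, fun h x hx => x.apply_eq_true_of_le h hx⟩
  by_contra hab
  obtain ⟨x, hx⟩ := exists_apply_eq_true (fun h => hab (sdiff_eq_bot_iff.mp h))
  obtain ⟨hxa, hxb⟩ : x a = true ∧ x b = false := by simpa [sdiff_eq, map_compl'] using hx
  exact absurd (h hxa) (by simp [hxb])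

theorem exists_basicOpen_eq_cylinder (x : StonePoints B) (s : Finset B) :
    ∃ b : B, ∀ z : StonePoints B, z ∈ basicOpen b ↔ ∀ i ∈ s, z i = x i := by
  refine ⟨s.inf fun i => bif x i then i else iᶜ, fun z => ?_⟩
  rw [mem_basicOpen, map_finset_inf]
  refine (Finset.inf_eq_top_iff _ s).trans (forall₂_congr fun i _ => ?_)
  cases hx : x i <;> cases hz : z i <;> simp [hx, hz]

theorem exists_basicOpen_subset {U : Set (StonePoints B)} (hU : IsOpen U) {x : StonePoints B}
    (hx : x ∈ U) : ∃ b : B, x ∈ basicOpen b ∧ basicOpen b ⊆ U := by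
  obtain ⟨W, hW, rfl⟩ := isOpen_induced_iff.mp hU
  obtain ⟨s, u, hu, hsub⟩ := isOpen_pi_iff.mp hW _ hx
  obtain ⟨b, hb⟩ := exists_basicOpen_eq_cylinder x s
  refine ⟨b, (hb x).mpr fun _ _ => rfl, fun z hz => hsub fun i hi => ?_⟩
  change z i ∈ u i
  rw [(hb z).mp hz i hi]
  exact (hu i hi).2

end BooleanAlgebra

section Comap

variable {B₀ B₁ : Type*} [BooleanAlgebra B₀] [BooleanAlgebra B₁] (e : BoundedLatticeHom B₀ B₁)

noncomputable def comap (x : StonePoints B₁) : StonePoints B₀ := x.comp e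

@[simp]
theorem comap_apply (x : StonePoints B₁) (a : B₀) : comap e x a = x (e a) := rfl

def kerMapIdeal (z : StonePoints B₀) : Order.Ideal B₁ where
  carrier := {d | ∃ a, z a = false ∧ d ≤ e a}
  lower' _ _ hd := fun ⟨a, ha, hle⟩ => ⟨a, ha, hd.trans hle⟩
  nonempty' := ⟨⊥, ⊥, map_bot z, bot_le⟩
  directed' _ := fun ⟨a, ha, hd⟩ _ ⟨a', ha', hd'⟩ =>
    ⟨e (a ⊔ a'), ⟨a ⊔ a', by simp [ha, ha'], le_rfl⟩,
      hd.trans (OrderHomClass.mono e le_sup_left), hd'.trans (OrderHomClass.mono e le_sup_right)⟩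

theorem exists_comap_eq {b : B₁} {z : StonePoints B₀} (h : ∀ a, b ≤ e a → z a = true) :
    ∃ x ∈ basicOpen b, comap e x = z := by
  obtain ⟨x, hxF, hxI⟩ := DistribLattice.exists_boolHom_of_disjoint_filter_ideal
    (F := .principal b) (I := kerMapIdeal e z) <| Set.disjoint_left.mpr
      fun d hbd ⟨a, hza, hda⟩ => by simp [h a (le_trans hbd hda)] at hza
  refine ⟨x, hxF b le_rfl, DFunLike.ext _ _ fun a => ?_⟩
  cases hza : z a
  · exact hxI (e a) ⟨a, hza, le_rfl⟩
  · simpa using hxI (e aᶜ) ⟨aᶜ, by simp [hza], le_rfl⟩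

theorem comap_image_basicOpen_subset {a : B₀} {b : B₁} (h : b ≤ e a) :
    comap e '' basicOpen b ⊆ basicOpen a := by
  rintro _ ⟨x, hx, rfl⟩
  exact x.apply_eq_true_of_le h hx

theorem comap_image_basicOpen {b : B₁} {c : B₀} (hc : IsLeast {a | b ≤ e a} c) :
    comap e '' basicOpen b = basicOpen c :=
  (comap_image_basicOpen_subset e hc.1).antisymm fun z hz =>
    exists_comap_eq e fun _ ha => z.apply_eq_true_of_le (hc.2 ha) hz

theorem isOpenMap_comap (h : ∀ b : B₁, ∃ c, IsLeast {a | b ≤ e a} c) : IsOpenMap (comap e) := by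
  intro U hU
  rw [isOpen_iff_forall_mem_open]
  rintro _ ⟨x, hxU, rfl⟩
  obtain ⟨b, hxb, hbU⟩ := exists_basicOpen_subset hU hxU
  obtain ⟨c, hc⟩ := h b
  refine ⟨basicOpen c, ?_, isOpen_basicOpen c, ?_⟩ <;> rw [← comap_image_basicOpen e hc]
  · exact Set.image_mono hbU
  · exact Set.mem_image_of_mem _ hxb

theorem exists_ne_bot_mem_lowerBounds_of_isOpenMap (h : IsOpenMap (comap e)) {b : B₁}
    (hb : b ≠ ⊥) : ∃ c ≠ ⊥, c ∈ lowerBounds {a | b ≤ e a} := by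
  obtain ⟨x, hx⟩ := exists_apply_eq_true hb
  obtain ⟨c, hxc, hcU⟩ :=
    exists_basicOpen_subset (h _ (isOpen_basicOpen b)) (Set.mem_image_of_mem (comap e) hx)
  refine ⟨c, ?_, fun a ha => basicOpen_subset_basicOpen_iff.mp
    (hcU.trans (comap_image_basicOpen_subset e ha))⟩
  rintro rfl
  simp at hxc

end Comap

end StonePoints

theorem le_map_sInf_setOf_le_map {B₀ B₁ : Type*} [CompleteBooleanAlgebra B₀] [BooleanAlgebra B₁]
    (e : BoundedLatticeHom B₀ B₁) (H : ∀ b : B₁, b ≠ ⊥ → sInf {a | b ≤ e a} ≠ ⊥) (b : B₁) :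
    b ≤ e (sInf {a | b ≤ e a}) := by
  set c := sInf {a | b ≤ e a}
  by_contra hbc
  refine H (b \ e c) (fun h => hbc (sdiff_eq_bot_iff.mp h)) (le_bot_iff.mp ?_)
  calc sInf {a | b \ e c ≤ e a}
      ≤ c ⊓ cᶜ := le_inf (sInf_le_sInf fun a ha => sdiff_le.trans ha)
        (sInf_le (by simp [sdiff_eq]))
    _ = ⊥ := inf_compl_eq_bot

theorem dual_open_iff_complete_embedding_general
    {A0 A1 : Type*} [CompleteBooleanAlgebra A0] [CompleteBooleanAlgebra A1]
    (e : BoundedLatticeHom A0 A1) :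
    IsOpenMap (fun x : StonePoints A1 => (BoundedLatticeHom.comp x e : StonePoints A0)) ↔
      ∀ b : A1, b ≠ ⊥ → sInf {a : A0 | b ≤ e a} ≠ ⊥ := by
  refine ⟨fun hopen b hb hbot => ?_, fun H => ?_⟩
  · obtain ⟨c, hc, hlb⟩ := StonePoints.exists_ne_bot_mem_lowerBounds_of_isOpenMap e hopen hb
    exact hc (le_bot_iff.mp (hbot ▸ le_sInf hlb))
  · exact StonePoints.isOpenMap_comap e fun b =>
      ⟨_, le_map_sInf_setOf_le_map e H b, fun _ => sInf_le⟩

/-- The dual map of an injective bounded lattice homomorphism between complete Boolean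
algebras is open iff the homomorphism is a complete embedding. -/
theorem dual_open_iff_complete_embedding
    {A0 A1 : Type*} [CompleteBooleanAlgebra A0] [CompleteBooleanAlgebra A1]
    (e : BoundedLatticeHom A0 A1) (he : Function.Injective e) :
    IsOpenMap (fun x : StonePoints A1 => (BoundedLatticeHom.comp x e : StonePoints A0)) ↔
      ∀ b : A1, b ≠ ⊥ → sInf {a : A0 | b ≤ e a} ≠ ⊥ :=
  dual_open_iff_complete_embedding_general e
end

section
/- Let A0 and A1 be complete Boolean algebras and e : A0 → A1 an injective bounded lattice homomorphism preserving arbitrary suprema (a complete embedding), with projection h : A1 → A0 given by h(b) = sInf {a ∈ A0 : b ≤ e(a)}. Then for every b ∈ A1, the image under the dual map p : X_{A1} → X_{A0}, p(x) = x ∘ e, of the basic clopen set O_b equals the basic clopen set O_{h(b)}; that is, {x ∘ e : x ∈ X_{A1}, x(b) = true} = {y ∈ X_{A0} : y(h(b)) = true}. -/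
namespace Order.Ideal

variable {α β F : Type*} [FunLike F α β]

section SemilatticeSup

variable [SemilatticeSup α] [SemilatticeSup β]

def map [SupHomClass F α β] (f : F) (I : Ideal α) : Ideal β :=
  IsIdeal.toIdeal (I := {c | ∃ a ∈ I, c ≤ f a})
    { IsLowerSet := fun _ _ hle ⟨a, ha, hc⟩ => ⟨a, ha, hle.trans hc⟩
      Nonempty := let ⟨a, ha⟩ := I.nonempty; ⟨f a, a, ha, le_rfl⟩
      Directed := by
        rintro c ⟨a, ha, hc⟩ d ⟨a', ha', hd⟩
        refine ⟨f (a ⊔ a'), ⟨a ⊔ a', sup_mem ha ha', le_rfl⟩, ?_, ?_⟩ <;> rw [map_sup]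
        exacts [le_sup_of_le_left hc, le_sup_of_le_right hd] }

theorem mem_map [SupHomClass F α β] {f : F} {I : Ideal α} {c : β} :
    c ∈ I.map f ↔ ∃ a ∈ I, c ≤ f a :=
  Iff.rfl

def comap [OrderBot α] [OrderBot β] [SupBotHomClass F α β] (f : F) (J : Ideal β) : Ideal α :=
  IsIdeal.toIdeal (I := f ⁻¹' J)
    { IsLowerSet := fun _ _ hle h => J.lower (OrderHomClass.mono f hle) h
      Nonempty := ⟨⊥, by simp [J.bot_mem]⟩
      Directed := fun a ha a' ha' =>
        ⟨a ⊔ a', by simpa [map_sup] using sup_mem ha ha', le_sup_left, le_sup_right⟩ }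

theorem mem_comap [OrderBot α] [OrderBot β] [SupBotHomClass F α β] {f : F} {J : Ideal β}
    {a : α} : a ∈ J.comap f ↔ f a ∈ J :=
  Iff.rfl

end SemilatticeSup

section Lattice

variable [Lattice α]

theorem IsPrime.inf_mem_iff_s10 {J : Ideal α} (hJ : J.IsPrime) {c d : α} :
    c ⊓ d ∈ J ↔ c ∈ J ∨ d ∈ J :=
  ⟨hJ.mem_or_mem, fun h => h.elim (J.lower inf_le_left) (J.lower inf_le_right)⟩

open Classical in
noncomputable def notMemHom [BoundedOrder α] (J : Ideal α) [hJ : J.IsPrime] :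
    BoundedLatticeHom α Bool where
  toFun c := decide (c ∉ J)
  map_sup' c d := by simp [sup_mem_iff]
  map_inf' c d := by simp [hJ.inf_mem_iff_s10, not_or]
  map_top' := by simpa using hJ.top_notMem
  map_bot' := by simp [J.bot_mem]

open Classical in
theorem notMemHom_apply [BoundedOrder α] (J : Ideal α) [J.IsPrime] (c : α) :
    J.notMemHom c = decide (c ∉ J) :=
  rfl

end Lattice

end Order.Ideal

namespace BoundedLatticeHom

theorem exists_bool_of_disjoint {α : Type*} [DistribLattice α] [BoundedOrder α]
    {F : Order.PFilter α} {I : Order.Ideal α} (hFI : Disjoint (F : Set α) I) :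
    ∃ x : BoundedLatticeHom α Bool, (∀ c ∈ F, x c = true) ∧ ∀ c ∈ I, x c = false := by
  obtain ⟨J, hJ, hIJ, hFJ⟩ := DistribLattice.prime_ideal_of_disjoint_filter_ideal hFI
  exact ⟨J.notMemHom, fun c hc => by simpa [J.notMemHom_apply] using hFJ.notMem_of_mem_left hc,
    fun c hc => by simpa [J.notMemHom_apply] using hIJ hc⟩

theorem eq_of_forall_le_bool {α : Type*} [BooleanAlgebra α] {x y : BoundedLatticeHom α Bool}
    (h : ∀ a, x a ≤ y a) : x = y := by
  ext a
  refine (h a).antisymm ?_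
  simpa only [map_compl', compl_le_compl_iff_le] using h aᶜ

theorem map_sInf_of_map_sSup {α β : Type*} [CompleteBooleanAlgebra α] [CompleteBooleanAlgebra β]
    (e : BoundedLatticeHom α β) (he : ∀ S : Set α, e (sSup S) = sSup (e '' S)) (S : Set α) :
    e (sInf S) = sInf (e '' S) :=
  compl_injective <| by
    rw [← map_compl', compl_sInf', he, compl_sInf', Set.image_image, Set.image_image]
    simp only [map_compl']

end BoundedLatticeHom

theorem le_map_sInf_setOf_le_map_s10 {α β : Type*} [CompleteLattice α] [CompleteLattice β]
    {e : α → β} (he : ∀ S : Set α, e (sInf S) = sInf (e '' S)) (b : β) :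
    b ≤ e (sInf {a | b ≤ e a}) := by
  rw [he]
  exact le_sInf <| Set.forall_mem_image.2 fun _ ha => ha

theorem exists_apply_eq_true_comp_eq {A0 A1 : Type*} [CompleteBooleanAlgebra A0]
    [DistribLattice A1] [BoundedOrder A1] (e : BoundedLatticeHom A0 A1) {b : A1}
    {y : BoundedLatticeHom A0 Bool} (hy : y (sInf {a | b ≤ e a}) = true) :
    ∃ x : BoundedLatticeHom A1 Bool, x b = true ∧ x.comp e = y := by
  set K : Order.Ideal A0 := (Order.Ideal.principal ⊥).comap y
  have mem_K {a : A0} : a ∈ K ↔ y a = false :=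
    Order.Ideal.mem_comap.trans (Order.Ideal.mem_principal.trans le_bot_iff)
  have hdisj : Disjoint (Order.PFilter.principal b : Set A1) (K.map e) := by
    refine Set.disjoint_left.2 fun c (hbc : b ≤ c) ⟨a, ha, hca⟩ => ?_
    have hle : y (sInf {a | b ≤ e a}) ≤ y a := OrderHomClass.mono y (sInf_le (hbc.trans hca))
    rw [hy, mem_K.1 ha] at hle
    exact absurd hle (by decide)
  obtain ⟨x, hxb, hxe⟩ := BoundedLatticeHom.exists_bool_of_disjoint hdisj
  refine ⟨x, hxb b le_rfl, BoundedLatticeHom.eq_of_forall_le_bool fun a => ?_⟩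
  cases hya : y a
  · exact (hxe (e a) (Order.Ideal.mem_map.2 ⟨a, mem_K.2 hya, le_rfl⟩)).le
  · exact le_top

theorem image_basic_clopen_general
    {A0 A1 : Type*} [CompleteBooleanAlgebra A0] [CompleteBooleanAlgebra A1]
    (e : BoundedLatticeHom A0 A1)
    (he_sSup : ∀ S : Set A0, e (sSup S) = sSup (e '' S))
    (b : A1) :
    (fun x : StonePoints A1 => (BoundedLatticeHom.comp x e : StonePoints A0)) ''
        {x : StonePoints A1 | x b = true} =
      {y : StonePoints A0 | y (sInf {a : A0 | b ≤ e a}) = true} := by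
  have hb : b ≤ e (sInf {a | b ≤ e a}) :=
    le_map_sInf_setOf_le_map_s10 (e.map_sInf_of_map_sSup he_sSup) b
  ext y
  constructor
  · rintro ⟨x, hx : x b = true, rfl⟩
    exact top_le_iff.1 (hx ▸ OrderHomClass.mono x hb : true ≤ x (e _))
  · exact exists_apply_eq_true_comp_eq e

/-- For a complete embedding `e : A0 → A1` with projection `h`, the image of the basic
clopen set `O_b` under the dual map is the basic clopen set `O_{h(b)}`. -/
theorem image_basic_clopen
    {A0 A1 : Type*} [CompleteBooleanAlgebra A0] [CompleteBooleanAlgebra A1]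
    (e : BoundedLatticeHom A0 A1) (he : Function.Injective e)
    (he_sSup : ∀ S : Set A0, e (sSup S) = sSup (e '' S))
    (b : A1) :
    (fun x : StonePoints A1 => (BoundedLatticeHom.comp x e : StonePoints A0)) ''
        {x : StonePoints A1 | x b = true} =
      {y : StonePoints A0 | y (sInf {a : A0 | b ≤ e a}) = true} :=
  image_basic_clopen_general e he_sSup b
end
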